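/- arXiv:2105.15025 — 8 statements merged into one kernel-verified Lean document; each statement's English description precedes it below -/
import Mathlib

section
/- For every integer ℓ ≥ 1 and every integer m ≥ 0, Stern's formula holds: 2^{ℓ-1} · S_1(m)^ℓ = Σ_{ν odd, 1 ≤ ν ≤ ℓ} (ℓ choose ν) · S_{2ℓ-ν}(m), where S_n(m) = Σ_{k=0}^{m-1} k^n. -/
/-!
Write `T m = ∑ k < m, k`, so that `2 T m = m (m - 1)`. The increment
`(2 T (k + 1))^ℓ - (2 T k)^ℓ = (k² + k)^ℓ - (k² - k)^ℓ` keeps only the odd terms of the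
binomial expansion, namely `2 ∑_{ν odd} (ℓ choose ν) k^(2ℓ - ν)`. Summing over `k < m`
telescopes to `2^ℓ T(m)^ℓ = 2 ∑_{ν odd} (ℓ choose ν) S_{2ℓ-ν}(m)`.
-/

open Finset

theorem add_pow_sub_neg_add_pow {R : Type*} [CommRing R] (x y : R) (n : ℕ) :
    (x + y) ^ n - (-x + y) ^ n
      = 2 * ∑ ν ∈ (range (n + 1)).filter Odd, x ^ ν * y ^ (n - ν) * n.choose ν := by
  rw [add_pow, add_pow, ← sum_sub_distrib, ← sum_filter_add_sum_filter_not _ Odd, mul_sum]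
  have even_terms_cancel : ∑ ν ∈ (range (n + 1)).filter (¬ Odd ·),
      (x ^ ν * y ^ (n - ν) * n.choose ν - (-x) ^ ν * y ^ (n - ν) * n.choose ν) = 0 :=
    sum_eq_zero fun ν hν => by
      rw [(Nat.not_odd_iff_even.mp (mem_filter.mp hν).2).neg_pow, sub_self]
  rw [even_terms_cancel, add_zero]
  refine sum_congr rfl fun ν hν => ?_
  rw [(mem_filter.mp hν).2.neg_pow]
  ring

theorem two_mul_sum_range_intCast (m : ℕ) : 2 * ∑ k ∈ range m, (k : ℤ) = m * (m - 1) := by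
  induction m with
  | zero => simp
  | succ m ih => rw [sum_range_succ, mul_add, ih]; push_cast; ring

theorem pow_pronic_succ_sub_pow_pronic (ℓ : ℕ) (k : ℤ) :
    ((k + 1) * k) ^ ℓ - (k * (k - 1)) ^ ℓ
      = 2 * ∑ ν ∈ (range (ℓ + 1)).filter Odd, (ℓ.choose ν : ℤ) * k ^ (2 * ℓ - ν) := by
  have h := add_pow_sub_neg_add_pow k (k ^ 2) ℓ
  rw [show (k + 1) * k = k + k ^ 2 by ring, show k * (k - 1) = -k + k ^ 2 by ring, h]
  congr 1
  refine sum_congr rfl fun ν hν => ?_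
  have hν : ν ≤ ℓ := Nat.lt_succ_iff.mp (mem_range.mp (mem_filter.mp hν).1)
  rw [← pow_mul, ← pow_add, mul_comm, show ν + 2 * (ℓ - ν) = 2 * ℓ - ν by omega]

theorem pow_pronic_eq_two_mul_sum_odd_choose_mul_sum_pow {ℓ : ℕ} (hℓ : ℓ ≠ 0) (m : ℕ) :
    ((m : ℤ) * (m - 1)) ^ ℓ
      = 2 * ∑ ν ∈ (range (ℓ + 1)).filter Odd,
          (ℓ.choose ν : ℤ) * ∑ k ∈ range m, (k : ℤ) ^ (2 * ℓ - ν) := by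
  have telescope := sum_range_sub (fun k : ℕ => ((k : ℤ) * (k - 1)) ^ ℓ) m
  simp only [Nat.cast_succ, add_sub_cancel_right, Nat.cast_zero, zero_mul, zero_pow hℓ,
    sub_zero, pow_pronic_succ_sub_pow_pronic] at telescope
  rw [← telescope, ← mul_sum, sum_comm]
  simp only [mul_sum]

theorem stern_formula (ℓ : ℕ) (hℓ : 1 ≤ ℓ) (m : ℕ) :
    2 ^ (ℓ - 1) * (∑ k ∈ Finset.range m, k) ^ ℓ
      = ∑ ν ∈ (Finset.range (ℓ + 1)).filter (fun ν => Odd ν),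
          ℓ.choose ν * ∑ k ∈ Finset.range m, k ^ (2 * ℓ - ν) := by
  zify
  apply mul_left_cancel₀ (two_ne_zero (α := ℤ))
  rw [← pow_pronic_eq_two_mul_sum_odd_choose_mul_sum_pow (by omega), ← two_mul_sum_range_intCast,
    mul_pow, ← mul_assoc, ← pow_succ', Nat.sub_add_cancel hℓ]
end

section
/- (Faulhaber–Jacobi) For every n ≥ 2 there exists a polynomial F_n ∈ ℚ[x] of degree ⌊n/2⌋ - 1 such that S_n(x) = f_n(x) · F_n(S_1(x)) as polynomials in ℚ[x], where f_n(x) = S_2(x) if n is even, and f_n(x) = S_1(x)^2 if n is odd. -/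
/-!
The reflection `x ↦ 1 - x` acts on `S n` by the sign `(-1)^(n+1)` (reflection formula for
Bernoulli polynomials), and `S 1 = x(x-1)/2` is invariant under it. An invariant polynomial is a
polynomial in `x(x-1)`: subtract its value at `0`, which makes it vanish at `0` and `1`, divide by
`x(x-1)` and descend on the degree. An anti-invariant one vanishes at `1/2`, so it is `x - 1/2`
times an invariant one. The remaining factors come from the zero of `S n` at `0`, which is double
for odd `n ≥ 3` because `S n' = B_n(x)` and `B_n = 0`; the degree of `F` is then forced by
`deg S n = n + 1`.
-/

open Polynomial

noncomputable def S (n : ℕ) : ℚ[X] :=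
  C ((n : ℚ) + 1)⁻¹ * (Polynomial.bernoulli (n + 1) - C (_root_.bernoulli (n + 1)))

theorem X_mul_X_sub_one_comp_one_sub_X {R : Type*} [CommRing R] :
    (X * (X - 1) : R[X]).comp (1 - X) = X * (X - 1) := by
  simp only [mul_comp, sub_comp, X_comp, one_comp]
  ring

theorem natDegree_X_mul_X_sub_one {R : Type*} [CommRing R] [Nontrivial R] :
    (X * (X - 1) : R[X]).natDegree = 2 := by
  compute_degree!

section Reflection

variable {R : Type*} [CommRing R] [IsDomain R]

theorem X_mul_X_sub_one_ne_zero : (X * (X - 1) : R[X]) ≠ 0 :=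
  mul_ne_zero X_ne_zero (by simpa using X_sub_C_ne_zero (1 : R))

theorem exists_eq_C_add_X_mul_X_sub_one_mul_of_comp_one_sub_X_eq {p : R[X]}
    (hp : p.comp (1 - X) = p) :
    ∃ q : R[X], q.comp (1 - X) = q ∧ p = C (p.eval 0) + X * (X - 1) * q := by
  obtain ⟨q, hq⟩ : X ∣ p - C (p.eval 0) := X_dvd_iff.mpr (by simp [coeff_zero_eq_eval_zero])
  have hq1 : q.IsRoot 1 := by
    have hp1 : p.eval 1 = p.eval 0 := by simpa using congr_arg (eval 1) hp.symm
    simpa [hp1] using (congr_arg (eval 1) hq).symm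
  obtain ⟨r, hr⟩ := dvd_iff_isRoot.mpr hq1
  have hpr : p = C (p.eval 0) + X * (X - 1) * r := by
    rw [← sub_eq_iff_eq_add', hq, hr, map_one, mul_assoc]
  refine ⟨r, ?_, hpr⟩
  have h := congr_arg (·.comp (1 - X)) hpr
  simp only [hp, add_comp, C_comp] at h
  rw [mul_comp, X_mul_X_sub_one_comp_one_sub_X] at h
  exact mul_left_cancel₀ X_mul_X_sub_one_ne_zero (add_left_cancel (h.symm.trans hpr))

theorem exists_eq_comp_X_mul_X_sub_one_of_comp_one_sub_X_eq {p : R[X]}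
    (hp : p.comp (1 - X) = p) : ∃ F : R[X], p = F.comp (X * (X - 1)) := by
  induction hd : p.natDegree using Nat.strong_induction_on generalizing p with
  | _ d ih =>
    obtain ⟨q, hq, hpq⟩ := exists_eq_C_add_X_mul_X_sub_one_mul_of_comp_one_sub_X_eq hp
    rcases eq_or_ne q 0 with rfl | hq0
    · exact ⟨C (p.eval 0), by simpa using hpq⟩
    have hdeg : q.natDegree < d := by
      rw [← hd, hpq, natDegree_C_add, natDegree_mul X_mul_X_sub_one_ne_zero hq0,
        natDegree_X_mul_X_sub_one]
      omega
    obtain ⟨G, rfl⟩ := ih _ hdeg hq rfl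
    exact ⟨C (p.eval 0) + X * G, hpq.trans (by simp [mul_comp])⟩

end Reflection

theorem exists_eq_X_sub_C_mul_of_comp_one_sub_X_eq_neg {K : Type*} [Field K] [NeZero (2 : K)]
    {p : K[X]} (hp : p.comp (1 - X) = -p) :
    ∃ q : K[X], q.comp (1 - X) = q ∧ p = (X - C 2⁻¹) * q := by
  have hhalf : (1 : K) - 2⁻¹ = 2⁻¹ := by simpa using sub_half (1 : K)
  have hroot : p.IsRoot 2⁻¹ := by
    have h := congr_arg (eval 2⁻¹) hp
    rw [eval_comp, eval_sub, eval_one, eval_X, hhalf, eval_neg, eq_neg_iff_add_eq_zero,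
      ← two_mul] at h
    exact (mul_eq_zero.mp h).resolve_left two_ne_zero
  obtain ⟨q, hq⟩ := dvd_iff_isRoot.mpr hroot
  refine ⟨q, ?_, hq⟩
  have h := congr_arg (·.comp (1 - X)) hq
  have hflip : (1 - X - C 2⁻¹ : K[X]) = -(X - C 2⁻¹) := by
    rw [sub_right_comm, ← C_1, ← C_sub, hhalf, neg_sub]
  simp only [mul_comp, sub_comp, X_comp, C_comp, hp, hflip, neg_mul, neg_inj] at h
  exact mul_left_cancel₀ (X_sub_C_ne_zero _) (h.symm.trans hq)

theorem natDegree_bernoulli (n : ℕ) : (Polynomial.bernoulli n).natDegree = n :=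
  natDegree_eq_of_le_of_coeff_ne_zero
    (natDegree_le_iff_coeff_eq_zero.mpr fun i hi => by
      rw [coeff_bernoulli, if_neg (by exact_mod_cast hi.not_ge)])
    (by simp [coeff_bernoulli])

theorem natDegree_S (n : ℕ) : (S n).natDegree = n + 1 := by
  rw [S, natDegree_C_mul (by positivity), natDegree_sub_C, natDegree_bernoulli]

theorem S_eval_zero (n : ℕ) : (S n).eval 0 = 0 := by simp [S]

theorem derivative_S (n : ℕ) : derivative (S n) = Polynomial.bernoulli n := by
  rw [S, derivative_C_mul, derivative_sub, derivative_C, sub_zero, derivative_bernoulli_add_one,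
    ← mul_assoc, ← C_eq_natCast, ← C_1, ← C_add, ← C_mul, inv_mul_cancel₀ (by positivity), C_1,
    one_mul]

theorem S_comp_one_sub_X {n : ℕ} (hn : n ≠ 0) : (S n).comp (1 - X) = (-1) ^ (n + 1) * S n := by
  rcases Nat.even_or_odd (n + 1) with h | h
  · simp [S, bernoulli_comp_one_sub_X, h.neg_one_pow]
  · simp [S, bernoulli_comp_one_sub_X, h.neg_one_pow, bernoulli_eq_zero_of_odd h (by omega)]

theorem S_one : S 1 = C 2⁻¹ * (X * (X - 1)) := by
  refine Polynomial.funext fun x => ?_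
  norm_num [S, Polynomial.bernoulli, Finset.sum_range_succ]
  ring

theorem S_two : S 2 = C 3⁻¹ * ((X - C 2⁻¹) * (X * (X - 1))) := by
  refine Polynomial.funext fun x => ?_
  norm_num [S, Polynomial.bernoulli, Finset.sum_range_succ]
  ring

theorem X_mul_X_sub_one_eq_C_mul_S_one : (X * (X - 1) : ℚ[X]) = C 2 * S 1 := by
  rw [S_one, ← mul_assoc, ← C_mul, mul_inv_cancel₀ two_ne_zero, C_1, one_mul]

theorem comp_X_mul_X_sub_one (p : ℚ[X]) :
    p.comp (X * (X - 1)) = (p.comp (C 2 * X)).comp (S 1) := by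
  rw [comp_assoc, mul_comp, C_comp, X_comp, X_mul_X_sub_one_eq_C_mul_S_one]

theorem exists_S_eq_S_one_sq_mul_comp {n : ℕ} (hodd : Odd n) (hn : 1 < n) :
    ∃ G : ℚ[X], S n = S 1 ^ 2 * G.comp (S 1) := by
  obtain ⟨F, hF⟩ := exists_eq_comp_X_mul_X_sub_one_of_comp_one_sub_X_eq (p := S n)
    (by rw [S_comp_one_sub_X (by omega), hodd.add_one.neg_one_pow, one_mul])
  have hF0 : F.coeff 0 = 0 := by
    simpa [coeff_zero_eq_eval_zero, eval_comp] using
      (congr_arg (eval 0) hF).symm.trans (S_eval_zero n)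
  have hF1 : F.coeff 1 = 0 := by
    have h := congr_arg (fun p => (derivative p).eval 0) hF
    simp only [derivative_S, bernoulli_eval_zero, bernoulli_eq_zero_of_odd hodd hn,
      derivative_comp, derivative_mul, derivative_X, derivative_sub, derivative_one, eval_mul,
      eval_add, eval_sub, eval_X, eval_one, eval_comp, one_mul, mul_one, sub_zero, zero_sub,
      add_zero, mul_neg, neg_zero, neg_mul, zero_eq_neg] at h
    simpa [← coeff_zero_eq_eval_zero, coeff_derivative] using h
  obtain ⟨G, rfl⟩ := X_pow_dvd_iff.mpr fun d (hd : d < 2) => by interval_cases d <;> assumption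
  refine ⟨C 4 * G.comp (C 2 * X), ?_⟩
  rw [hF, mul_comp, pow_comp, X_comp, comp_X_mul_X_sub_one G, mul_comp, C_comp,
    X_mul_X_sub_one_eq_C_mul_S_one, show (4 : ℚ) = 2 ^ 2 by norm_num, C_pow]
  ring

theorem exists_S_eq_S_two_mul_comp {n : ℕ} (heven : Even n) (hn : n ≠ 0) :
    ∃ G : ℚ[X], S n = S 2 * G.comp (S 1) := by
  obtain ⟨q, hq, hSq⟩ := exists_eq_X_sub_C_mul_of_comp_one_sub_X_eq_neg (p := S n)
    (by rw [S_comp_one_sub_X hn, heven.add_one.neg_one_pow, neg_one_mul])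
  obtain ⟨F, rfl⟩ := exists_eq_comp_X_mul_X_sub_one_of_comp_one_sub_X_eq hq
  have hF0 : F.coeff 0 = 0 := by
    have h := (congr_arg (eval 0) hSq).symm.trans (S_eval_zero n)
    simp only [eval_mul, eval_sub, eval_X, eval_C, eval_one, eval_comp, zero_sub, mul_neg,
      mul_one, neg_zero, neg_mul, neg_eq_zero, mul_eq_zero, inv_eq_zero, OfNat.ofNat_ne_zero,
      false_or] at h
    rwa [coeff_zero_eq_eval_zero]
  obtain ⟨G, rfl⟩ := X_dvd_iff.mpr hF0
  refine ⟨C 3 * G.comp (C 2 * X), ?_⟩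
  rw [hSq, mul_comp, X_comp, comp_X_mul_X_sub_one G, mul_comp, C_comp, S_two]
  have h3 : (C 3⁻¹ * C 3 : ℚ[X]) = 1 := by rw [← C_mul, inv_mul_cancel₀ three_ne_zero, C_1]
  linear_combination (-(X - C 2⁻¹) * (X * (X - 1)) * (G.comp (C 2 * X)).comp (S 1)) * h3

theorem faulhaber_jacobi (n : ℕ) (hn : 2 ≤ n) :
    ∃ F : ℚ[X], F.natDegree = n / 2 - 1 ∧
      S n = (if Even n then S 2 else (S 1) ^ 2) * F.comp (S 1) := by
  obtain ⟨F, hF⟩ : ∃ F : ℚ[X], S n = (if Even n then S 2 else (S 1) ^ 2) * F.comp (S 1) := by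
    split_ifs with h
    · exact exists_S_eq_S_two_mul_comp h (by omega)
    · exact exists_S_eq_S_one_sq_mul_comp (Nat.not_even_iff_odd.mp h) hn
  refine ⟨F, ?_, hF⟩
  have hS : S n ≠ 0 := fun h => by simpa [h] using natDegree_S n
  have hdeg := congr_arg natDegree hF
  rw [natDegree_S, natDegree_mul (left_ne_zero_of_mul (hF ▸ hS)) (right_ne_zero_of_mul (hF ▸ hS)),
    natDegree_comp, natDegree_S] at hdeg
  split_ifs at hdeg with h
  · rw [natDegree_S] at hdeg
    omega
  · rw [natDegree_pow, natDegree_S] at hdeg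
    omega
end

section
/- The constant term of the Faulhaber polynomial satisfies F_n(0) = 6·B_n when n ≥ 2 is even, and F_n(0) = 2n·B_{n-1} when n ≥ 3 is odd; moreover F_n(1) = 1 for all n ≥ 2. -/
open Polynomial

/-!
Both values come from comparing the two sides of `S n = f · F(S 1)` at the two roots `0` and `2`
of `S 1 = x(x-1)/2`. At `x = 2` every `S k` with `k ≥ 1` takes the value `1`, which gives
`F(1) = 1`. At `x = 0` the factor `f` vanishes (to order one for `S 2`, to order two for `S 1 ^ 2`),
so the first (resp. second) derivative of the identity at `0` reads
`B_n = B_2 · F(0)` (resp. `n B_{n-1} = 2 B_1(0)² · F(0)`), using `S k' = B_k(x)`.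
-/

section Derivative

variable {R : Type*} [CommSemiring R] {x : R}

theorem eval_derivative_mul_of_eval_eq_zero {p : R[X]} (hp : p.eval x = 0) (q : R[X]) :
    (derivative (p * q)).eval x = (derivative p).eval x * q.eval x := by
  simp [derivative_mul, hp]

theorem eval_derivative_derivative_sq_mul_of_eval_eq_zero {r : R[X]} (hr : r.eval x = 0)
    (q : R[X]) :
    (derivative (derivative (r ^ 2 * q))).eval x = 2 * (derivative r).eval x ^ 2 * q.eval x := by
  have hfactor : derivative (r ^ 2 * q) = r * (2 * derivative r * q + r * derivative q) := by
    simp only [sq, derivative_mul]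
    ring
  rw [hfactor, eval_derivative_mul_of_eval_eq_zero hr]
  simp only [eval_add, eval_mul, eval_ofNat, hr, zero_mul, add_zero]
  ring

end Derivative

theorem S_eval_natCast (n m : ℕ) : (S n).eval (m : ℚ) = ∑ k ∈ Finset.range m, (k : ℚ) ^ n := by
  have hn : ((n : ℚ) + 1) ≠ 0 := by positivity
  rw [S, eval_mul, eval_C, eval_sub, eval_C, Polynomial.bernoulli_succ_eval, add_sub_cancel_left,
    inv_mul_cancel_left₀ hn]

theorem S_eval_two {n : ℕ} (hn : n ≠ 0) : (S n).eval 2 = 1 := by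
  simpa [Finset.sum_range_succ, hn] using S_eval_natCast n 2

theorem eval_one_of_S_eq_mul_comp {n : ℕ} (hn : n ≠ 0) {f F : ℚ[X]} (hf : f.eval 2 = 1)
    (h : S n = f * F.comp (S 1)) : F.eval 1 = 1 := by
  simpa [S_eval_two hn, hf, S_eval_two one_ne_zero] using (congrArg (eval 2) h).symm

theorem faulhaber_special_values (n : ℕ) (F : ℚ[X]) :
    (2 ≤ n → Even n → S n = S 2 * F.comp (S 1) →
      F.eval 0 = 6 * _root_.bernoulli n ∧ F.eval 1 = 1) ∧
    (3 ≤ n → Odd n → S n = (S 1) ^ 2 * F.comp (S 1) →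
      F.eval 0 = 2 * n * _root_.bernoulli (n - 1) ∧ F.eval 1 = 1) := by
  have hF0 : (F.comp (S 1)).eval 0 = F.eval 0 := by rw [eval_comp, S_eval_zero]
  refine ⟨fun hn _ h => ⟨?_, eval_one_of_S_eq_mul_comp (by omega) (S_eval_two two_ne_zero) h⟩,
    fun hn _ h => ⟨?_, eval_one_of_S_eq_mul_comp (by omega) (by simp [S_eval_two]) h⟩⟩
  · have hB : _root_.bernoulli n = _root_.bernoulli 2 * F.eval 0 :=
      calc _root_.bernoulli n = (derivative (S n)).eval 0 := by
            rw [derivative_S, Polynomial.bernoulli_eval_zero]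
        _ = (derivative (S 2 * F.comp (S 1))).eval 0 := by rw [h]
        _ = _root_.bernoulli 2 * F.eval 0 := by
            rw [eval_derivative_mul_of_eval_eq_zero (S_eval_zero 2), derivative_S,
              Polynomial.bernoulli_eval_zero, hF0]
    rw [hB, bernoulli_two]
    ring
  · have hB : n * _root_.bernoulli (n - 1) = 2 * _root_.bernoulli 1 ^ 2 * F.eval 0 :=
      calc n * _root_.bernoulli (n - 1) = (derivative (derivative (S n))).eval 0 := by
            rw [derivative_S, Polynomial.derivative_bernoulli, eval_mul, eval_natCast,
              Polynomial.bernoulli_eval_zero]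
        _ = (derivative (derivative (S 1 ^ 2 * F.comp (S 1)))).eval 0 := by rw [h]
        _ = 2 * _root_.bernoulli 1 ^ 2 * F.eval 0 := by
            rw [eval_derivative_derivative_sq_mul_of_eval_eq_zero (S_eval_zero 1), derivative_S,
              Polynomial.bernoulli_eval_zero, hF0]
    rw [_root_.bernoulli_one] at hB
    linear_combination -2 * hB
end

section
/- For odd n ≥ 3, the coefficients of F_{n-1} and F_n are related by f_{n-1,k} = (3/(2n))·(k+2)·f_{n,k} for all 0 ≤ k ≤ deg F_n. -/
open Polynomial

lemma bnum2 : _root_.bernoulli 2 = 1/6 := by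
  rw [bernoulli_eq_bernoulli'_of_ne_one (by norm_num), bernoulli'_two]

lemma bnum_odd {m : ℕ} (h : Odd m) (hm : 1 < m) : _root_.bernoulli m = 0 := by
  rw [bernoulli_eq_bernoulli'_of_ne_one (by omega), bernoulli'_eq_zero_of_odd h hm]

lemma bern2 : Polynomial.bernoulli 2 = C (1/6 : ℚ) - X + X^2 := by
  apply Polynomial.funext; intro x
  simp [Polynomial.bernoulli, Finset.sum_range_succ, _root_.bernoulli_zero,
    _root_.bernoulli_one, bnum2, eval_monomial]
  ring

lemma bern3 : Polynomial.bernoulli 3 = C (1/2 : ℚ) * X - C (3/2) * X^2 + X^3 := by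
  apply Polynomial.funext; intro x
  have h3 : _root_.bernoulli 3 = 0 := bnum_odd (by decide) (by norm_num)
  simp [Polynomial.bernoulli, Finset.sum_range_succ, _root_.bernoulli_zero,
    _root_.bernoulli_one, bnum2, h3, eval_monomial]
  ring

lemma S1_eq : S 1 = C (1/2 : ℚ) * (X^2 - X) := by
  apply Polynomial.funext; intro x
  simp [S, bern2, bnum2]
  ring

lemma dS1 : derivative (S 1) = X - C (1/2 : ℚ) := by
  rw [S1_eq]
  apply Polynomial.funext; intro x
  simp
  ring

lemma S2_eq' : S 2 = C (2/3 : ℚ) * (S 1 * derivative (S 1)) := by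
  rw [dS1, S1_eq]
  have h3 : _root_.bernoulli 3 = 0 := bnum_odd (by decide) (by norm_num)
  apply Polynomial.funext; intro x
  simp [S, bern3, h3]
  ring

lemma dS (m : ℕ) : derivative (S m) = Polynomial.bernoulli m := by
  have h : ((m : ℚ) + 1) ≠ 0 := by positivity
  apply Polynomial.funext; intro x
  simp [S, Polynomial.derivative_bernoulli_add_one]
  field_simp

lemma S1_ne : S 1 * derivative (S 1) ≠ 0 := by
  rw [dS1, S1_eq]
  intro h
  have := congrArg (eval 2) h
  norm_num at this

theorem faulhaber_coeff_odd_even (n : ℕ) (hn : 3 ≤ n) (hodd : Odd n)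
    (F G : ℚ[X])
    (hF : S n = (S 1) ^ 2 * F.comp (S 1))
    (hG : S (n - 1) = S 2 * G.comp (S 1))
    (k : ℕ) (hk : k ≤ F.natDegree) :
    G.coeff k = 3 / (2 * n) * (k + 2) * F.coeff k := by
  have hn0 : (n : ℚ) ≠ 0 := by positivity
  have hbn : _root_.bernoulli n = 0 := bnum_odd hodd (by omega)
  -- S (n-1) in terms of bernoulli polynomial
  have hSn1 : Polynomial.bernoulli n = C (n : ℚ) * S (n - 1) := by
    have h1 : n - 1 + 1 = n := by omega
    rw [S, h1, hbn]
    have h2 : ((n - 1 : ℕ) : ℚ) + 1 = (n : ℚ) := by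
      have : ((n - 1 : ℕ) : ℚ) = (n : ℚ) - 1 := by
        push_cast [Nat.cast_sub (by omega : 1 ≤ n)]; ring
      rw [this]; ring
    rw [h2, C_0, sub_zero, ← mul_assoc, ← C_mul, mul_inv_cancel₀ hn0, C_1, one_mul]
  -- differentiate hF
  have hder : C (n : ℚ) * S (n - 1) = derivative ((S 1) ^ 2 * F.comp (S 1)) := by
    rw [← hSn1, ← dS n, hF]
  rw [derivative_mul, derivative_pow, derivative_comp, hG, S2_eq'] at hder
  have key : (S 1 * derivative (S 1)) * ((C (n:ℚ) * C (2/3:ℚ) * G).comp (S 1)) =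
      (S 1 * derivative (S 1)) * ((C 2 * F + X * derivative F).comp (S 1)) := by
    simp only [add_comp, mul_comp, C_comp, X_comp]
    ring_nf
    ring_nf at hder
    linear_combination hder
  have hcomp : ((C (n:ℚ) * C (2/3:ℚ) * G) - (C 2 * F + X * derivative F)).comp (S 1) = 0 := by
    rw [sub_comp]
    have := mul_left_cancel₀ S1_ne key
    rw [this]; ring
  have hpoly : C (n:ℚ) * C (2/3:ℚ) * G = C 2 * F + X * derivative F := by
    rcases comp_eq_zero_iff.mp hcomp with h | ⟨_, h⟩
    · exact sub_eq_zero.mp h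
    · exfalso
      have : (S 1).natDegree = 2 := by
        rw [S1_eq]
        compute_degree!
      rw [h] at this
      simp [natDegree_C] at this
  -- extract coefficient k
  have hc := congrArg (fun p => Polynomial.coeff p k) hpoly
  simp only [mul_assoc, coeff_C_mul, coeff_add] at hc
  have hx : (X * derivative F).coeff k = k * F.coeff k := by
    cases k with
    | zero => simp
    | succ m =>
      rw [coeff_X_mul, coeff_derivative]
      push_cast; ring
  rw [hx] at hc
  have h23 : (n:ℚ) * (2/3) ≠ 0 := by positivity
  field_simp at hc ⊢
  linarith [hc]
end

section
/- For odd n ≥ 3, the leading coefficient of the Faulhaber polynomial F_n equals 2^{(n+1)/2}/(n+1). -/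
open Polynomial

/-!
Since the Bernoulli polynomial `B_m` is monic of degree `m`, `S m` has degree `m + 1` and leading
coefficient `1 / (m + 1)`. Comparing degrees in `S n = S 1 ^ 2 * F(S 1)` gives
`n + 1 = 2 (deg F + 2)`, and comparing leading coefficients gives
`1 / (n + 1) = lc F / 2 ^ (deg F + 2)`.
-/

namespace Polynomial

theorem bernoulli_natDegree_le (n : ℕ) : (bernoulli n).natDegree ≤ n :=
  natDegree_le_iff_coeff_eq_zero.mpr fun i hi => by
    rw [coeff_bernoulli, if_neg (not_le.mpr hi)]

theorem coeff_bernoulli_self (n : ℕ) : (bernoulli n).coeff n = 1 := by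
  simp [coeff_bernoulli]

theorem natDegree_bernoulli (n : ℕ) : (bernoulli n).natDegree = n :=
  natDegree_eq_of_le_of_coeff_ne_zero (bernoulli_natDegree_le n) (by simp [coeff_bernoulli_self])

section CommRing

variable {R : Type*} [CommRing R] [NoZeroDivisors R]

theorem leadingCoeff_pow_mul_comp {q : R[X]} (hq : q.natDegree ≠ 0) (k : ℕ) (F : R[X]) :
    (q ^ k * F.comp q).leadingCoeff = F.leadingCoeff * q.leadingCoeff ^ (F.natDegree + k) := by
  rw [leadingCoeff_mul, leadingCoeff_pow, leadingCoeff_comp hq, pow_add]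
  ring

theorem natDegree_pow_mul_comp {q : R[X]} (hq : q.natDegree ≠ 0) (k : ℕ) {F : R[X]}
    (hF : F ≠ 0) : (q ^ k * F.comp q).natDegree = (F.natDegree + k) * q.natDegree := by
  have hq0 : q ≠ 0 := by rintro rfl; exact hq natDegree_zero
  have hFq : F.comp q ≠ 0 := by
    rw [← leadingCoeff_ne_zero, leadingCoeff_comp hq]
    exact mul_ne_zero (leadingCoeff_ne_zero.mpr hF) (pow_ne_zero _ (leadingCoeff_ne_zero.mpr hq0))
  rw [natDegree_mul (pow_ne_zero k hq0) hFq, natDegree_pow, natDegree_comp]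
  ring

end CommRing

end Polynomial

theorem leadingCoeff_S (n : ℕ) : (S n).leadingCoeff = ((n : ℚ) + 1)⁻¹ := by
  rw [leadingCoeff, natDegree_S, S, coeff_C_mul, coeff_sub, coeff_C_of_ne_zero n.succ_ne_zero,
    coeff_bernoulli_self, sub_zero, mul_one]

theorem S_ne_zero (n : ℕ) : S n ≠ 0 := by
  rw [← leadingCoeff_ne_zero, leadingCoeff_S]
  positivity

theorem faulhaber_leading_coeff_general (n : ℕ)
    (F : ℚ[X]) (hF : S n = (S 1) ^ 2 * F.comp (S 1)) :
    F.leadingCoeff = 2 ^ ((n + 1) / 2) / ((n : ℚ) + 1) := by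
  have hS1 : (S 1).natDegree ≠ 0 := by rw [natDegree_S]; norm_num
  have hF0 : F ≠ 0 := by
    rintro rfl
    exact S_ne_zero n (by simpa using hF)
  have hdeg : F.natDegree + 2 = (n + 1) / 2 := by
    have := congrArg natDegree hF
    rw [natDegree_S, natDegree_pow_mul_comp hS1 2 hF0, natDegree_S] at this
    omega
  have hlc := congrArg leadingCoeff hF
  rw [leadingCoeff_S, leadingCoeff_pow_mul_comp hS1 2, leadingCoeff_S, hdeg] at hlc
  rw [div_eq_mul_inv, hlc, Nat.cast_one, one_add_one_eq_two, inv_pow]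
  field_simp

theorem faulhaber_leading_coeff (n : ℕ) (hn : 3 ≤ n) (hodd : Odd n)
    (F : ℚ[X]) (hF : S n = (S 1) ^ 2 * F.comp (S 1)) :
    F.leadingCoeff = 2 ^ ((n + 1) / 2) / ((n : ℚ) + 1) :=
  faulhaber_leading_coeff_general n F hF
end

section
/- For odd n ≥ 3 and 0 ≤ ℓ ≤ (n-3)/2, the coefficients of the Faulhaber polynomial satisfy (n choose (ℓ+1))·B_{n-(ℓ+1)} = (ℓ+2)·Σ_{k=0}^{ℓ} ((k+2) choose (ℓ-k)) · (1/2)^{k+2} · f_{n,k}. -/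
open Polynomial

/-!
Compare the coefficients of `X ^ (ℓ + 2)` on both sides of `S n = (S 1) ^ 2 * F.comp (S 1)`.
On the left it is `B_{n-ℓ-1} * C(n, ℓ+1) / (ℓ + 2)`. On the right, since `S 1 = X (X - 1) / 2`
is divisible by `X`, only the `f_k` with `k ≤ ℓ` contribute, `(S 1) ^ (k + 2)` contributing
`(-1)^ℓ 2^{-(k+2)} C(k+2, ℓ-k)`. The sign is harmless: as `n` is odd, `ℓ` and `n - ℓ - 1` have
the same parity, and `(-1)^m B_m = B_m` for `m ≠ 1` because the odd Bernoulli numbers beyond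
`B_1` vanish.
-/

theorem neg_one_pow_mul_bernoulli_of_ne_one {m : ℕ} (hm : m ≠ 1) :
    (-1) ^ m * _root_.bernoulli m = _root_.bernoulli m := by
  rw [← bernoulli'_eq_bernoulli, bernoulli_eq_bernoulli'_of_ne_one hm]

namespace Polynomial

theorem coeff_pow_mul_comp_of_X_dvd {R : Type*} [CommSemiring R] {p : R[X]} (hp : X ∣ p)
    (F : R[X]) (m j : ℕ) :
    (p ^ m * F.comp p).coeff (j + m) =
      ∑ k ∈ Finset.range (j + 1), F.coeff k * (p ^ (k + m)).coeff (j + m) := by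
  have hvanish : ∀ k, j < k → (p ^ (k + m)).coeff (j + m) = 0 := by
    obtain ⟨q, rfl⟩ := hp
    intro k hk
    rw [mul_pow, coeff_X_pow_mul', if_neg (by omega)]
  calc (p ^ m * F.comp p).coeff (j + m) = F.sum fun k a => a * (p ^ (k + m)).coeff (j + m) := by
        rw [comp_eq_sum_left, sum_def, sum_def, Finset.mul_sum, finsetSum_coeff]
        refine Finset.sum_congr rfl fun k _ => ?_
        rw [mul_left_comm, ← pow_add, add_comm m, coeff_C_mul]
    _ = ∑ k ∈ Finset.range (j + 1 + F.natDegree), F.coeff k * (p ^ (k + m)).coeff (j + m) :=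
        sum_over_range' F (f := fun k a => a * (p ^ (k + m)).coeff (j + m)) (fun _ => zero_mul _) _
          (by omega)
    _ = ∑ k ∈ Finset.range (j + 1), F.coeff k * (p ^ (k + m)).coeff (j + m) := by
        rw [Finset.sum_range_add, Finset.sum_eq_zero (s := Finset.range F.natDegree)
          fun k _ => by rw [hvanish _ (by omega), mul_zero], add_zero]

end Polynomial

theorem S_one_eq : S 1 = C (1 / 2 : ℚ) * (X * (X - 1)) :=
  Polynomial.funext fun x => by
    simp [S, Polynomial.bernoulli, Finset.sum_range_succ]
    ring

theorem X_dvd_S_one : X ∣ S 1 :=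
  ⟨C (1 / 2) * (X - 1), by rw [S_one_eq]; ring⟩

theorem coeff_S_one_pow (m i : ℕ) :
    ((S 1) ^ m).coeff (m + i) = (-1) ^ (m + i) * (1 / 2) ^ m * m.choose i := by
  rw [S_one_eq, mul_pow, mul_pow, ← C_pow, coeff_C_mul, coeff_X_pow_mul', if_pos (by omega),
    add_tsub_cancel_left, sub_eq_add_neg, ← C_1, ← C_neg, coeff_X_add_C_pow]
  rcases le_or_gt i m with hi | hi
  · rw [neg_one_pow_eq_pow_mod_two, neg_one_pow_eq_pow_mod_two (n := m + i),
      show (m - i) % 2 = (m + i) % 2 by omega]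
    ring
  · simp [Nat.choose_eq_zero_of_lt hi]

theorem coeff_S_one_sq_mul_comp (F : ℚ[X]) (ℓ : ℕ) :
    ((S 1) ^ 2 * F.comp (S 1)).coeff (ℓ + 2) = (-1) ^ ℓ * ∑ k ∈ Finset.range (ℓ + 1),
      ((k + 2).choose (ℓ - k) : ℚ) * (1 / 2 : ℚ) ^ (k + 2) * F.coeff k := by
  rw [coeff_pow_mul_comp_of_X_dvd X_dvd_S_one, Finset.mul_sum]
  refine Finset.sum_congr rfl fun k hk => ?_
  have hkℓ : k ≤ ℓ := Finset.mem_range_succ_iff.mp hk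
  rw [show ℓ + 2 = k + 2 + (ℓ - k) by omega, coeff_S_one_pow, show k + 2 + (ℓ - k) = ℓ + 2 by omega,
    pow_add]
  ring

theorem coeff_S_succ (n j : ℕ) :
    (S n).coeff (j + 1) = _root_.bernoulli (n - j) * n.choose j / (j + 1) := by
  rw [S, coeff_C_mul, coeff_sub, coeff_C, if_neg j.succ_ne_zero, sub_zero, coeff_bernoulli]
  split_ifs with h
  · have hchoose : ((n + 1).choose (j + 1) : ℚ) * (j + 1) = (n + 1) * n.choose j := by
      exact_mod_cast (Nat.add_one_mul_choose_eq n j).symm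
    rw [Nat.add_sub_add_right]
    field_simp
    linear_combination (_root_.bernoulli (n - j)) * hchoose
  · simp [Nat.choose_eq_zero_of_lt (show n < j by omega)]

theorem faulhaber_coeff_bernoulli_recurrence_general (n : ℕ) (hodd : Odd n)
    (F : ℚ[X]) (hF : S n = (S 1) ^ 2 * F.comp (S 1))
    (ℓ : ℕ) (hℓ : ℓ ≤ (n - 3) / 2) :
    (n.choose (ℓ + 1) : ℚ) * _root_.bernoulli (n - (ℓ + 1))
      = (ℓ + 2) * ∑ k ∈ Finset.range (ℓ + 1),
          ((k + 2).choose (ℓ - k) : ℚ) * (1 / 2 : ℚ) ^ (k + 2) * F.coeff k := by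
  have hsign : (-1 : ℚ) ^ ℓ * _root_.bernoulli (n - (ℓ + 1)) = _root_.bernoulli (n - (ℓ + 1)) := by
    obtain ⟨t, rfl⟩ := hodd
    rw [neg_one_pow_eq_pow_mod_two, show ℓ % 2 = (2 * t + 1 - (ℓ + 1)) % 2 by omega,
      ← neg_one_pow_eq_pow_mod_two]
    exact neg_one_pow_mul_bernoulli_of_ne_one (m := 2 * t + 1 - (ℓ + 1)) (by omega)
  have hcoeff : _root_.bernoulli (n - (ℓ + 1)) * n.choose (ℓ + 1) / (ℓ + 2)
      = ∑ k ∈ Finset.range (ℓ + 1),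
          ((k + 2).choose (ℓ - k) : ℚ) * (1 / 2 : ℚ) ^ (k + 2) * F.coeff k := by
    refine mul_left_cancel₀ (pow_ne_zero ℓ (neg_ne_zero.mpr one_ne_zero)) ?_
    rw [← coeff_S_one_sq_mul_comp, ← hF, coeff_S_succ n (ℓ + 1), ← mul_div_assoc, ← mul_assoc,
      hsign]
    push_cast
    ring
  rw [← hcoeff]
  field_simp

theorem faulhaber_coeff_bernoulli_recurrence (n : ℕ) (hn : 3 ≤ n) (hodd : Odd n)
    (F : ℚ[X]) (hF : S n = (S 1) ^ 2 * F.comp (S 1))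
    (ℓ : ℕ) (hℓ : ℓ ≤ (n - 3) / 2) :
    (n.choose (ℓ + 1) : ℚ) * _root_.bernoulli (n - (ℓ + 1))
      = (ℓ + 2) * ∑ k ∈ Finset.range (ℓ + 1),
          ((k + 2).choose (ℓ - k) : ℚ) * (1 / 2 : ℚ) ^ (k + 2) * F.coeff k :=
  faulhaber_coeff_bernoulli_recurrence_general n hodd F hF ℓ hℓ
end

section
/- For n, k ≥ ℓ ≥ 0, the ℓth derivative of the reciprocal Bernoulli polynomial B_{n,k}(x) = x^k·B_n(1/x) at x = 1 equals (-1)^n · ℓ! · Σ_{ν=0}^{ℓ} ((k-ν) choose (k-ℓ)) · (n choose ν) · B_{n-ν}. -/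
/-!
By the reflection formula `B_n(1 - t) = (-1)^n B_n(t)` and the binomial expansion of `B_n`,
away from `0` one has `x^k B_n(1/x) = (-1)^n ∑_ν C(n,ν) B_{n-ν} (x - 1)^ν x^(k-ν)`.
By the Leibniz rule the `ℓ`th derivative at `1` of `(x - 1)^ν h(x)` is `C(ℓ,ν) ν! h^(ℓ-ν)(1)`,
which kills every term with `ν > ℓ`; for `ν ≤ ℓ ≤ k` the factor `x^(k-ν)` is a polynomial and
`C(ℓ,ν) ν! (k-ν)(k-ν-1)⋯(k-ℓ+1) = ℓ! C(k-ν, k-ℓ)`.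
-/

/-- The generalized reciprocal Bernoulli polynomial `x ↦ x^k · B_n(x⁻¹)` as a real function. -/
noncomputable def recipBernoulli (n k : ℕ) : ℝ → ℝ :=
  fun x => x ^ k * Polynomial.aeval x⁻¹ (Polynomial.bernoulli n)

open Finset Nat

theorem iteratedDeriv_sub_pow_mul {𝕜 : Type*} [NontriviallyNormedField 𝕜] {h : 𝕜 → 𝕜}
    {a : 𝕜} {ℓ : ℕ} (ν : ℕ) (hh : ContDiffAt 𝕜 ℓ h a) :
    iteratedDeriv ℓ (fun x => (x - a) ^ ν * h x) a
      = ℓ.choose ν * ν ! * iteratedDeriv (ℓ - ν) h a := by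
  have hpow (i : ℕ) :
      iteratedDeriv i (fun x => (x - a) ^ ν) a = if i = ν then (ν ! : 𝕜) else 0 := by
    rw [iteratedDeriv_comp_sub_const i (· ^ ν)]
    dsimp only
    rw [sub_self, iteratedDeriv_fun_pow_zero, cast_ite, cast_zero]
  rw [iteratedDeriv_fun_mul (by fun_prop) hh]
  simp only [hpow, mul_ite, ite_mul, mul_zero, zero_mul, sum_ite_eq', mem_range]
  split_ifs with hν
  · ring
  · rw [choose_eq_zero_of_lt (by omega), cast_zero, zero_mul, zero_mul]

theorem pow_mul_one_sub_inv_pow {K : Type*} [Field K] {x : K} (hx : x ≠ 0) (k ν : ℕ) :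
    x ^ k * (1 - x⁻¹) ^ ν = (x - 1) ^ ν * x ^ ((k : ℤ) - ν) := by
  rw [zpow_sub₀ hx, zpow_natCast, zpow_natCast, ← one_div, one_sub_div hx, div_pow]
  ring

theorem recipBernoulli_eq_sum (n k : ℕ) {x : ℝ} (hx : x ≠ 0) :
    recipBernoulli n k x = ∑ ν ∈ range (n + 1),
      (-1) ^ n * n.choose ν * (bernoulli (n - ν) : ℝ) * ((x - 1) ^ ν * x ^ ((k : ℤ) - ν)) := by
  have hreflect : Polynomial.aeval x⁻¹ (Polynomial.bernoulli n)
      = (-1) ^ n * Polynomial.aeval (1 - x⁻¹) (Polynomial.bernoulli n) := by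
    simpa [Polynomial.aeval_comp] using
      congrArg (Polynomial.aeval (1 - x⁻¹)) (Polynomial.bernoulli_comp_one_sub_X n)
  rw [recipBernoulli, hreflect, Polynomial.bernoulli_def, map_sum, mul_sum, mul_sum]
  refine sum_congr rfl fun ν _ => ?_
  rw [Polynomial.aeval_monomial, ← pow_mul_one_sub_inv_pow hx]
  simp only [eq_ratCast, Rat.cast_mul, Rat.cast_natCast]
  ring

theorem Nat.choose_mul_factorial_mul_descFactorial {ℓ k ν : ℕ} (hνℓ : ν ≤ ℓ) (hℓk : ℓ ≤ k) :
    ℓ.choose ν * ν ! * (k - ν).descFactorial (ℓ - ν) = ℓ ! * (k - ν).choose (k - ℓ) := by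
  rw [descFactorial_eq_factorial_mul_choose, ← mul_assoc, choose_mul_factorial_mul_factorial hνℓ,
    show k - ℓ = (k - ν) - (ℓ - ν) by omega, choose_symm (by omega)]

theorem recipBernoulli_iteratedDeriv_one_general (n k ℓ : ℕ) (hℓk : ℓ ≤ k) :
    iteratedDeriv ℓ (recipBernoulli n k) 1
      = (-1) ^ n * (Nat.factorial ℓ : ℝ) *
          ∑ ν ∈ Finset.range (ℓ + 1),
            ((k - ν).choose (k - ℓ) : ℝ) * (n.choose ν : ℝ) *
              ((bernoulli (n - ν) : ℚ) : ℝ) := by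
  set c : ℕ → ℝ := fun ν => (-1) ^ n * n.choose ν * (bernoulli (n - ν) : ℝ)
  set g : ℕ → ℝ := fun ν =>
    c ν * (ℓ.choose ν * ν ! * iteratedDeriv (ℓ - ν) (· ^ ((k : ℤ) - ν)) 1)
  have hexpand : recipBernoulli n k =ᶠ[nhds 1]
      fun x => ∑ ν ∈ range (n + 1), c ν * ((x - 1) ^ ν * x ^ ((k : ℤ) - ν)) :=
    (eventually_ne_nhds one_ne_zero).mono fun x hx => recipBernoulli_eq_sum n k hx
  have hsmooth (ν : ℕ) : ContDiffAt ℝ ℓ (· ^ ((k : ℤ) - ν)) (1 : ℝ) :=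
    (analyticAt_id.zpow one_ne_zero).contDiffAt
  have hg_eq_zero (ν : ℕ) (hν : n < ν ∨ ℓ < ν) : g ν = 0 := by
    rcases hν with hν | hν <;> simp [g, c, choose_eq_zero_of_lt hν]
  calc iteratedDeriv ℓ (recipBernoulli n k) 1
      = ∑ ν ∈ range (n + 1), g ν := by
        rw [hexpand.iteratedDeriv_eq, iteratedDeriv_fun_sum fun ν _ => by fun_prop]
        refine sum_congr rfl fun ν _ => ?_
        rw [iteratedDeriv_const_mul_field, iteratedDeriv_sub_pow_mul ν (hsmooth ν)]
    _ = ∑ ν ∈ range (n + ℓ + 1), g ν :=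
        sum_subset (range_subset_range.mpr (by omega)) fun ν _ hν =>
          hg_eq_zero ν (by rw [mem_range] at hν; omega)
    _ = ∑ ν ∈ range (ℓ + 1), g ν :=
        (sum_subset (range_subset_range.mpr (by omega)) fun ν _ hν =>
          hg_eq_zero ν (by rw [mem_range] at hν; omega)).symm
    _ = _ := by
        rw [mul_sum]
        refine sum_congr rfl fun ν hν => ?_
        have hνℓ : ν ≤ ℓ := mem_range_succ_iff.mp hν
        have hnat : (fun x : ℝ => x ^ ((k : ℤ) - ν)) = (· ^ (k - ν)) := by
          ext x
          rw [← zpow_natCast, Nat.cast_sub (by omega)]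
        simp only [g, c]
        rw [hnat, iteratedDeriv_pow, one_pow, mul_one, ← Nat.cast_mul, ← Nat.cast_mul,
          Nat.choose_mul_factorial_mul_descFactorial hνℓ hℓk]
        push_cast
        ring

theorem recipBernoulli_iteratedDeriv_one (n k ℓ : ℕ) (hℓn : ℓ ≤ n) (hℓk : ℓ ≤ k) :
    iteratedDeriv ℓ (recipBernoulli n k) 1
      = (-1) ^ n * (Nat.factorial ℓ : ℝ) *
          ∑ ν ∈ Finset.range (ℓ + 1),
            ((k - ν).choose (k - ℓ) : ℝ) * (n.choose ν : ℝ) *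
              ((bernoulli (n - ν) : ℚ) : ℝ) :=
  recipBernoulli_iteratedDeriv_one_general n k ℓ hℓk
end

section
/- Let B'_{n,k} = Σ_{ν=k}^{n} (n choose ν)·(ν choose k)·B_ν for 0 ≤ k ≤ n. Then the reflection relation B'_{n,k} = (-1)^n · B'_{n,n-k} holds; equivalently, for all r, s ≥ 0, (-1)^r Σ_{ν=0}^{r} (r choose ν) B_{s+ν} = (-1)^s Σ_{ν=0}^{s} (s choose ν) B_{r+ν}. -/
/-!
Write `S(r, s) = ∑_{ν ≤ r} (r choose ν) B_{s+ν}`. Pascal's rule gives `S(r+1, s) = S(r, s) + S(r, s+1)`,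
so the signed array `(-1)^r S(r, s)` and its transpose satisfy the same recursion in `r`. They agree at
`r = 0` because `∑_{ν ≤ n} (n choose ν) B_ν = (-1)^n B_n`, which is the defining recurrence of the
Bernoulli numbers. The reflection of `B'_{n,k}` follows since `B'_{n,k} = (n choose k) S(n - k, k)`.
-/

open Finset

section BinomialShift

variable {R : Type*}

/-- `((1 + E)^r f) s` for the shift operator `E f = f ∘ (· + 1)`. -/
def shiftedBinomialSum [Semiring R] (f : ℕ → R) (r s : ℕ) : R :=
  ∑ ν ∈ range (r + 1), (r.choose ν : R) * f (s + ν)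

section Semiring

variable [Semiring R] (f : ℕ → R)

@[simp]
lemma shiftedBinomialSum_zero_left (s : ℕ) : shiftedBinomialSum f 0 s = f s := by
  simp [shiftedBinomialSum]

lemma shiftedBinomialSum_succ_left (r s : ℕ) :
    shiftedBinomialSum f (r + 1) s = shiftedBinomialSum f r s + shiftedBinomialSum f r (s + 1) := by
  simp only [shiftedBinomialSum, sum_choose_succ_mul (fun i _ ↦ f (s + i)), add_right_comm s 1,
    add_assoc]

end Semiring

lemma sum_Icc_choose_mul_choose_mul [CommSemiring R] (f : ℕ → R) (k m : ℕ) :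
    ∑ ν ∈ Icc k (k + m), ((k + m).choose ν : R) * (ν.choose k : R) * f ν
      = ((k + m).choose k : R) * shiftedBinomialSum f m k := by
  rw [← Ico_add_one_right_eq_Icc, sum_Ico_eq_sum_range, shiftedBinomialSum, mul_sum,
    show k + m + 1 - k = m + 1 by omega]
  refine sum_congr rfl fun j _ ↦ ?_
  have hchoose : (k + m).choose (k + j) * (k + j).choose k = (k + m).choose k * m.choose j := by
    rw [Nat.choose_mul (Nat.le_add_right k j), Nat.add_sub_cancel_left, Nat.add_sub_cancel_left]
  rw [← mul_assoc, ← Nat.cast_mul, hchoose, Nat.cast_mul]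

section CommRing

variable [CommRing R] {f : ℕ → R}

theorem neg_one_pow_mul_shiftedBinomialSum_comm
    (hf : ∀ n, shiftedBinomialSum f n 0 = (-1) ^ n * f n) (r s : ℕ) :
    (-1) ^ r * shiftedBinomialSum f r s = (-1) ^ s * shiftedBinomialSum f s r := by
  induction r generalizing s with
  | zero => rw [hf, ← mul_assoc, ← pow_add, Even.neg_one_pow ⟨s, rfl⟩]; simp
  | succ r ih =>
    calc (-1) ^ (r + 1) * shiftedBinomialSum f (r + 1) s
        = -((-1) ^ r * shiftedBinomialSum f r s)
            - (-1) ^ r * shiftedBinomialSum f r (s + 1) := by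
          rw [shiftedBinomialSum_succ_left]; ring
      _ = (-1) ^ s * (shiftedBinomialSum f (s + 1) r - shiftedBinomialSum f s r) := by
          rw [ih, ih]; ring
      _ = (-1) ^ s * shiftedBinomialSum f s (r + 1) := by
          rw [shiftedBinomialSum_succ_left]; ring

theorem shiftedBinomialSum_comm (hf : ∀ n, shiftedBinomialSum f n 0 = (-1) ^ n * f n)
    (r s : ℕ) : shiftedBinomialSum f r s = (-1) ^ (r + s) * shiftedBinomialSum f s r := by
  rw [pow_add, mul_assoc, ← neg_one_pow_mul_shiftedBinomialSum_comm hf, ← mul_assoc, ← pow_add,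
    Even.neg_one_pow ⟨r, rfl⟩, one_mul]

end CommRing

end BinomialShift

theorem sum_range_succ_choose_mul_bernoulli (n : ℕ) :
    ∑ ν ∈ range (n + 1), (n.choose ν : ℚ) * bernoulli ν = bernoulli' n := by
  rw [sum_range_succ, sum_bernoulli, Nat.choose_self]
  rcases eq_or_ne n 1 with rfl | hn
  · norm_num
  · simp [hn, bernoulli_eq_bernoulli'_of_ne_one hn]

lemma shiftedBinomialSum_bernoulli_zero_right (n : ℕ) :
    shiftedBinomialSum bernoulli n 0 = (-1) ^ n * bernoulli n := by
  simp only [shiftedBinomialSum, zero_add, sum_range_succ_choose_mul_bernoulli,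
    bernoulli'_eq_bernoulli]

theorem bernoulli_reflection_and_reciprocity :
    (∀ n k : ℕ, k ≤ n →
      (∑ ν ∈ Finset.Icc k n, (n.choose ν : ℚ) * (ν.choose k : ℚ) * bernoulli ν)
        = (-1) ^ n *
            ∑ ν ∈ Finset.Icc (n - k) n,
              (n.choose ν : ℚ) * (ν.choose (n - k) : ℚ) * bernoulli ν) ∧
    (∀ r s : ℕ,
      (-1 : ℚ) ^ r * ∑ ν ∈ Finset.range (r + 1), (r.choose ν : ℚ) * bernoulli (s + ν)
        = (-1 : ℚ) ^ s * ∑ ν ∈ Finset.range (s + 1), (s.choose ν : ℚ) * bernoulli (r + ν)) := by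
  have hB := shiftedBinomialSum_bernoulli_zero_right
  refine ⟨fun n k hkn ↦ ?_, neg_one_pow_mul_shiftedBinomialSum_comm hB⟩
  obtain ⟨m, rfl⟩ := Nat.exists_eq_add_of_le hkn
  rw [Nat.add_sub_cancel_left, sum_Icc_choose_mul_choose_mul, add_comm k m,
    sum_Icc_choose_mul_choose_mul, Nat.choose_symm_add, shiftedBinomialSum_comm hB]
  ring
end
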